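/- arXiv:2211.04322 — 2 statements merged into one kernel-verified Lean document; each statement's English description precedes it below -/
import Mathlib

section
/- For all integers n ≥ 4, the injective dimension satisfies ID(n) ≤ ⌊n/2⌋. -/
namespace InjectiveSplitSystems

open Finset

variable {α : Type*} [DecidableEq α]

/-- A split of `X`: an unordered bipartition of `X` into two nonempty disjoint parts,
represented as the two-element set `{A, B}` of its parts. -/
def IsSplit (X : Finset α) (S : Finset (Finset α)) : Prop :=
  ∃ A B : Finset α, S = {A, B} ∧ A ∪ B = X ∧ A ∩ B = ∅ ∧ A ≠ ∅ ∧ B ≠ ∅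

/-- `S` is an `r`-split of `X`: a split of `X` whose minimum part size is `r`. -/
def IsRSplit (X : Finset α) (r : ℕ) (S : Finset (Finset α)) : Prop :=
  IsSplit X S ∧ (∃ A ∈ S, A.card = r) ∧ ∀ A ∈ S, r ≤ A.card

/-- A split system on `X`: a set of splits of `X` containing all trivial splits
`{x} | X \ {x}`, `x ∈ X`. -/
def IsSplitSystem (X : Finset α) (𝒮 : Finset (Finset (Finset α))) : Prop :=
  (∀ S ∈ 𝒮, IsSplit X S) ∧ ∀ x ∈ X, ({{x}, X \ {x}} : Finset (Finset α)) ∈ 𝒮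

/-- `phiNe Y Y' S` says `φ_Y(S) ≠ φ_{Y'}(S)`: the part of `S` containing at least two
elements of the 3-set `Y` differs from the part of `S` containing at least two
elements of the 3-set `Y'`. -/
def phiNe (Y Y' : Finset α) (S : Finset (Finset α)) : Prop :=
  ∃ t ∈ S, ∃ t' ∈ S, t ≠ t' ∧ 2 ≤ (Y ∩ t).card ∧ 2 ≤ (Y' ∩ t').card

/-- A split system on `X` is injective if for all distinct 3-subsets `Y`, `Y'` of `X`
there is a split `S ∈ 𝒮` with `φ_Y(S) ≠ φ_{Y'}(S)`. -/
def IsInjective (X : Finset α) (𝒮 : Finset (Finset (Finset α))) : Prop :=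
  ∀ Y Y' : Finset α, Y ⊆ X → Y' ⊆ X → Y.card = 3 → Y'.card = 3 → Y ≠ Y' →
    ∃ S ∈ 𝒮, phiNe Y Y' S

/-- The restriction `S|_Y` of a split to `Y`, as the set of restricted parts. -/
def restrictSplit (S : Finset (Finset α)) (Y : Finset α) : Finset (Finset α) :=
  S.image (· ∩ Y)

open scoped Classical in
/-- The restriction `𝒮|_Y` of a split system to `Y`: all splits
`(A ∩ Y) | (B ∩ Y)` with `A|B ∈ 𝒮` and both intersections nonempty. -/
noncomputable def restrictSS (𝒮 : Finset (Finset (Finset α))) (Y : Finset α) :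
    Finset (Finset (Finset α)) :=
  (𝒮.image fun S => restrictSplit S Y).filter fun T => ∀ t ∈ T, t ≠ ∅

/-- `𝒮` 4-dices `X`. -/
def FourDices (X : Finset α) (𝒮 : Finset (Finset (Finset α))) : Prop :=
  X.card < 4 ∨ ∀ Y ⊆ X, Y.card = 4 →
    ∃ 𝒯 ⊆ restrictSS 𝒮 Y, 2 ≤ 𝒯.card ∧ ∀ S ∈ 𝒯, IsRSplit Y 2 S

/-- `𝒮` 5-dices `X`. -/
def FiveDices (X : Finset α) (𝒮 : Finset (Finset (Finset α))) : Prop :=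
  X.card < 5 ∨ ∀ Y ⊆ X, Y.card = 5 →
    ∃ 𝒯 ⊆ restrictSS 𝒮 Y, 5 ≤ 𝒯.card ∧ ∀ S ∈ 𝒯, IsRSplit Y 2 S

/-- `𝒮` 6-dices `X`: every 6-subset restriction contains a 3-split or a triangle
of 2-splits. -/
def SixDices (X : Finset α) (𝒮 : Finset (Finset (Finset α))) : Prop :=
  X.card < 6 ∨ ∀ Y ⊆ X, Y.card = 6 →
    (∃ S ∈ restrictSS 𝒮 Y, IsRSplit Y 3 S) ∨
    (∃ x ∈ Y, ∃ y ∈ Y, ∃ z ∈ Y, x ≠ y ∧ x ≠ z ∧ y ≠ z ∧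
      ({{x, y}, Y \ {x, y}} : Finset (Finset α)) ∈ restrictSS 𝒮 Y ∧
      ({{x, z}, Y \ {x, z}} : Finset (Finset α)) ∈ restrictSS 𝒮 Y ∧
      ({{y, z}, Y \ {y, z}} : Finset (Finset α)) ∈ restrictSS 𝒮 Y)

/-- Two splits are incompatible if they are distinct and all four pairwise
intersections of their parts are nonempty. -/
def Incompatible (S T : Finset (Finset α)) : Prop :=
  S ≠ T ∧ ∀ A ∈ S, ∀ B ∈ T, A ∩ B ≠ ∅

open scoped Classical in
/-- The dimension of a split system: maximum size of a pairwise incompatible subset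
(which is `1` when all splits are pairwise compatible and `𝒮` is nonempty). -/
noncomputable def dimSS (𝒮 : Finset (Finset (Finset α))) : ℕ :=
  (𝒮.powerset.filter fun 𝒯 => ∀ S ∈ 𝒯, ∀ T ∈ 𝒯, S ≠ T → Incompatible S T).sup Finset.card

/-- The injective dimension `ID(n)`: minimum dimension of an injective split system
on `{1, …, n}`. -/
noncomputable def ID (n : ℕ) : ℕ :=
  sInf {d : ℕ | ∃ 𝒮 : Finset (Finset (Finset ℕ)),
    IsSplitSystem (Finset.Icc 1 n) 𝒮 ∧ IsInjective (Finset.Icc 1 n) 𝒮 ∧ dimSS 𝒮 = d}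

/-- The injective 2-split dimension `ID₂(n)`: minimum dimension of an injective split
system on `{1, …, n}` all of whose non-trivial splits have size 2. -/
noncomputable def ID2 (n : ℕ) : ℕ :=
  sInf {d : ℕ | ∃ 𝒮 : Finset (Finset (Finset ℕ)),
    IsSplitSystem (Finset.Icc 1 n) 𝒮 ∧ IsInjective (Finset.Icc 1 n) 𝒮 ∧
    (∀ S ∈ 𝒮, IsRSplit (Finset.Icc 1 n) 1 S ∨ IsRSplit (Finset.Icc 1 n) 2 S) ∧
    dimSS 𝒮 = d}

/-- `𝒮` is rooted-injective relative to `r`. -/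
def IsRootedInjective (X : Finset α) (r : α) (𝒮 : Finset (Finset (Finset α))) : Prop :=
  ∀ Z Z' : Finset α, Z ⊆ X \ {r} → Z' ⊆ X \ {r} → Z.card = 2 → Z'.card = 2 → Z ≠ Z' →
    ∃ S ∈ 𝒮, phiNe (insert r Z) (insert r Z') S

/-- The rooted-injective dimension `ID^r(n)`: minimum dimension of a split system on an
`n`-element set that is rooted-injective relative to a given element. -/
noncomputable def IDr (n : ℕ) : ℕ :=
  sInf {d : ℕ | ∃ 𝒮 : Finset (Finset (Finset ℕ)),
    IsSplitSystem (Finset.Icc 1 n) 𝒮 ∧ IsRootedInjective (Finset.Icc 1 n) 1 𝒮 ∧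
    dimSS 𝒮 = d}

/-- `𝒮` is circular: there is a labelling `x_1, …, x_n` of `X` such that every split
of `𝒮` has the form `{x_i, …, x_j} | complement`. -/
def IsCircular (X : Finset α) (𝒮 : Finset (Finset (Finset α))) : Prop :=
  ∃ f : ℕ → α, Set.InjOn f ↑(Finset.Icc 1 X.card) ∧
    (Finset.Icc 1 X.card).image f = X ∧
    ∀ S ∈ 𝒮, ∃ i j : ℕ, 1 ≤ i ∧ i ≤ j ∧ j ≤ X.card ∧
      S = {(Finset.Icc i j).image f, X \ (Finset.Icc i j).image f}

/-- `𝒮` is maximal circular: circular and not properly contained in any circular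
split system on `X`. -/
def IsMaximalCircular (X : Finset α) (𝒮 : Finset (Finset (Finset α))) : Prop :=
  IsCircular X 𝒮 ∧ ∀ 𝒮' : Finset (Finset (Finset α)),
    IsSplitSystem X 𝒮' → IsCircular X 𝒮' → 𝒮 ⊆ 𝒮' → 𝒮' = 𝒮

/-- The degree of `x` in the graph `P(𝒮)` on vertex set `X` whose edges are the
pairs `{x, y}` with `xy | X − {x,y} ∈ 𝒮`. -/
def degP (X : Finset α) (𝒮 : Finset (Finset (Finset α))) (x : α) : ℕ :=
  ((X \ {x}).filter fun y => ({{x, y}, X \ {x, y}} : Finset (Finset α)) ∈ 𝒮).card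

/-- `P(𝒮)` contains a 3-clique. -/
def HasTriangle (X : Finset α) (𝒮 : Finset (Finset (Finset α))) : Prop :=
  ∃ x ∈ X, ∃ y ∈ X, ∃ z ∈ X, x ≠ y ∧ x ≠ z ∧ y ≠ z ∧
    ({{x, y}, X \ {x, y}} : Finset (Finset α)) ∈ 𝒮 ∧
    ({{x, z}, X \ {x, z}} : Finset (Finset α)) ∈ 𝒮 ∧
    ({{y, z}, X \ {y, z}} : Finset (Finset α)) ∈ 𝒮

/-- Conditions (B1) and (B2) for a map to be a vertex of the Buneman graph. -/
def IsBunemanVertex (𝒮 : Finset (Finset (Finset α))) (φ : {S // S ∈ 𝒮} → Finset α) : Prop :=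
  (∀ S, φ S ∈ S.1) ∧ ∀ S S', S ≠ S' → (φ S ∩ φ S').Nonempty

/-- The vertex set of the Buneman graph `B(𝒮)`. -/
abbrev BunemanVertex (𝒮 : Finset (Finset (Finset α))) : Type _ :=
  {φ : {S // S ∈ 𝒮} → Finset α // IsBunemanVertex 𝒮 φ}

/-- The Buneman graph `B(𝒮)`: two vertices are adjacent iff they differ on exactly
one split. -/
def BunemanGraph (𝒮 : Finset (Finset (Finset α))) : SimpleGraph (BunemanVertex 𝒮) where
  Adj φ ψ := ∃! S, φ.1 S ≠ ψ.1 S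
  symm := by
    constructor
    rintro φ ψ ⟨S, hS, hU⟩
    exact ⟨S, hS.symm, fun T hT => hU T hT.symm⟩
  loopless := by
    constructor
    rintro φ ⟨S, hS, -⟩
    exact hS rfl

/-- `m` is a median of `u`, `v`, `w` in the graph `G`. -/
def IsMedian {V : Type*} (G : SimpleGraph V) (u v w m : V) : Prop :=
  G.dist u m + G.dist m v = G.dist u v ∧
  G.dist v m + G.dist m w = G.dist v w ∧
  G.dist u m + G.dist m w = G.dist u w

/-! The interval splits `{i, …, j} | X − {i, …, j}` of `X = {1, …, n}` form an injective split
system: the elements `a < b < c` of a 3-set are read off from which intervals contain two of them,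
as the least `j` with `{1, …, j}` doing so (`b`), the largest `i` with `{i, …, b}` doing so (`a`),
and the least `j` with `{b, …, j}` doing so (`c`, or `n` if there is none).
Pairwise incompatible intervals have distinct left ends, distinct right ends, and every left end
is at most every right end; so their `2k` end points, all in `{1, …, n - 1}`, take at least
`2k - 1` distinct values. -/

theorem exists_lt_lt_of_card_eq_three {Y : Finset ℕ} (h : Y.card = 3) :
    ∃ a b c : ℕ, a < b ∧ b < c ∧ Y = {a, b, c} := by
  obtain ⟨x, y, z, hxy, hxz, hyz, rfl⟩ := card_eq_three.mp h
  rcases hxy.lt_or_gt with h1 | h1 <;> rcases hxz.lt_or_gt with h2 | h2 <;>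
    rcases hyz.lt_or_gt with h3 | h3
  · exact ⟨x, y, z, h1, h3, rfl⟩
  · exact ⟨x, z, y, h2, h3, by ext; simp only [mem_insert, mem_singleton]; tauto⟩
  · omega
  · exact ⟨z, x, y, h2, h1, by ext; simp only [mem_insert, mem_singleton]; tauto⟩
  · exact ⟨y, x, z, h1, h2, by ext; simp only [mem_insert, mem_singleton]; tauto⟩
  · omega
  · exact ⟨y, z, x, h3, h2, by ext; simp only [mem_insert, mem_singleton]; tauto⟩
  · exact ⟨z, y, x, h3, h1, by ext; simp only [mem_insert, mem_singleton]; tauto⟩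

theorem two_le_card_inter_Icc_iff {a b c i j : ℕ} (hab : a < b) (hbc : b < c) :
    2 ≤ (({a, b, c} : Finset ℕ) ∩ Icc i j).card ↔ i ≤ a ∧ b ≤ j ∨ i ≤ b ∧ c ≤ j := by
  change 1 < _ ↔ _
  rw [one_lt_card_iff]
  simp only [mem_inter, mem_insert, mem_singleton, mem_Icc]
  constructor
  · rintro ⟨u, v, ⟨hu, hu'⟩, ⟨hv, hv'⟩, huv⟩
    rcases hu with rfl | rfl | rfl <;> rcases hv with rfl | rfl | rfl <;> omega
  · rintro (h | h)
    · exact ⟨a, b, ⟨by omega, by omega⟩, ⟨by omega, by omega⟩, hab.ne⟩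
    · exact ⟨b, c, ⟨by omega, by omega⟩, ⟨by omega, by omega⟩, hbc.ne⟩

theorem eq_of_forall_Icc_iff {n a b c a' b' c' : ℕ} (ha : 1 ≤ a) (hab : a < b) (hbc : b < c)
    (hc : c ≤ n) (ha' : 1 ≤ a') (hab' : a' < b') (hbc' : b' < c') (hc' : c' ≤ n)
    (h : ∀ i j, 1 ≤ i → i ≤ j → j ≤ n - 1 →
      (i ≤ a ∧ b ≤ j ∨ i ≤ b ∧ c ≤ j ↔ i ≤ a' ∧ b' ≤ j ∨ i ≤ b' ∧ c' ≤ j)) :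
    a = a' ∧ b = b' ∧ c = c' := by
  obtain rfl : b = b' := by
    have := h 1 (b - 1); have := h 1 (b' - 1); omega
  have := h (a + 1) b; have := h (a' + 1) b; have := h b (c - 1); have := h b (c' - 1)
  omega

theorem two_mul_card_le_of_fst_le_snd (s : Finset (ℕ × ℕ)) (m : ℕ)
    (hrange : ∀ p ∈ s, 1 ≤ p.1 ∧ p.2 ≤ m) (hfst : Set.InjOn Prod.fst (s : Set (ℕ × ℕ)))
    (hsnd : Set.InjOn Prod.snd (s : Set (ℕ × ℕ))) (hle : ∀ p ∈ s, ∀ q ∈ s, p.1 ≤ q.2) :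
    2 * s.card ≤ m + 1 := by
  set L := s.image Prod.fst
  set R := s.image Prod.snd
  have hunion : L ∪ R ⊆ Icc 1 m := by
    intro x hx
    rcases mem_union.mp hx with hx | hx <;> obtain ⟨p, hp, rfl⟩ := mem_image.mp hx <;>
      have := hrange p hp <;> have := hle p hp p hp <;> rw [mem_Icc] <;> omega
  have hinter : (L ∩ R).card ≤ 1 := by
    refine card_le_one.mpr fun x hx y hy => ?_
    obtain ⟨⟨p, hp, rfl⟩, ⟨p', hp', hp'x⟩⟩ := And.imp mem_image.mp mem_image.mp (mem_inter.mp hx)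
    obtain ⟨⟨q, hq, rfl⟩, ⟨q', hq', hq'y⟩⟩ := And.imp mem_image.mp mem_image.mp (mem_inter.mp hy)
    have := hle p hp q' hq'; have := hle q hq p' hp'
    omega
  have hL : L.card = s.card := card_image_of_injOn hfst
  have hR : R.card = s.card := card_image_of_injOn hsnd
  have hm : (L ∪ R).card ≤ m := (card_le_card hunion).trans_eq (by simp)
  have := card_union_add_card_inter L R
  omega

theorem dimSS_le {𝒮 : Finset (Finset (Finset α))} {k : ℕ}
    (h : ∀ 𝒯 ⊆ 𝒮, (∀ S ∈ 𝒯, ∀ T ∈ 𝒯, S ≠ T → Incompatible S T) → 𝒯.card ≤ k) :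
    dimSS 𝒮 ≤ k := by
  classical
  refine Finset.sup_le fun 𝒯 h𝒯 => ?_
  rw [mem_filter, mem_powerset] at h𝒯
  exact h 𝒯 h𝒯.1 h𝒯.2

theorem ID_le_dimSS {n : ℕ} {𝒮 : Finset (Finset (Finset ℕ))}
    (hsys : IsSplitSystem (Icc 1 n) 𝒮) (hinj : IsInjective (Icc 1 n) 𝒮) : ID n ≤ dimSS 𝒮 :=
  Nat.sInf_le ⟨𝒮, hsys, hinj, rfl⟩

theorem phiNe_symm {Y Y' : Finset α} {S : Finset (Finset α)} (h : phiNe Y Y' S) :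
    phiNe Y' Y S := by
  obtain ⟨t, ht, t', ht', hne, h1, h2⟩ := h
  exact ⟨t', ht', t, ht, hne.symm, h2, h1⟩

theorem phiNe_pair_of_card_inter {Y Y' A B : Finset α} (hAB : A ≠ B) (hY' : Y' ⊆ A ∪ B)
    (hcard : Y'.card = 3) (hYA : 2 ≤ (Y ∩ A).card) (hY'A : (Y' ∩ A).card < 2) :
    phiNe Y Y' {A, B} := by
  refine ⟨A, by simp, B, by simp, hAB, hYA, ?_⟩
  have : Y'.card ≤ (Y' ∩ A).card + (Y' ∩ B).card :=
    calc Y'.card = (Y' ∩ A ∪ Y' ∩ B).card := by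
          rw [← inter_union_distrib_left, inter_eq_left.mpr hY']
      _ ≤ _ := card_union_le _ _
  omega

def intervalSplit (n i j : ℕ) : Finset (Finset ℕ) :=
  {Icc i j, Icc 1 n \ Icc i j}

def intervalSplits (n : ℕ) : Finset (Finset (Finset ℕ)) :=
  ((Icc 1 (n - 1) ×ˢ Icc 1 (n - 1)).filter fun p => p.1 ≤ p.2).image
    fun p => intervalSplit n p.1 p.2

theorem mem_intervalSplits {n : ℕ} {S : Finset (Finset ℕ)} :
    S ∈ intervalSplits n ↔ ∃ i j, 1 ≤ i ∧ i ≤ j ∧ j ≤ n - 1 ∧ intervalSplit n i j = S := by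
  simp only [intervalSplits, mem_image, mem_filter, mem_product, mem_Icc, Prod.exists]
  constructor
  · rintro ⟨i, j, ⟨⟨⟨hi, -⟩, -, hj⟩, hij⟩, rfl⟩
    exact ⟨i, j, hi, hij, hj, rfl⟩
  · rintro ⟨i, j, hi, hij, hj, rfl⟩
    exact ⟨i, j, ⟨⟨⟨hi, by omega⟩, by omega, hj⟩, hij⟩, rfl⟩

theorem Icc_ne_sdiff_Icc {n i j : ℕ} (hij : i ≤ j) : Icc i j ≠ Icc 1 n \ Icc i j := by
  intro h
  have hi : i ∈ Icc i j := left_mem_Icc.mpr hij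
  rw [h] at hi
  exact (mem_sdiff.mp hi).2 (h ▸ hi)

theorem isSplit_intervalSplit {n i j : ℕ} (hi : 1 ≤ i) (hij : i ≤ j) (hj : j ≤ n - 1) :
    IsSplit (Icc 1 n) (intervalSplit n i j) := by
  refine ⟨_, _, rfl, union_sdiff_of_subset (Icc_subset_Icc hi (by omega)), inter_sdiff_self _ _,
    (nonempty_Icc.mpr hij).ne_empty, nonempty_iff_ne_empty.mp ⟨n, ?_⟩⟩
  simp only [mem_sdiff, mem_Icc]
  omega

theorem intervalSplits_isSplitSystem {n : ℕ} (hn : 2 ≤ n) :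
    IsSplitSystem (Icc 1 n) (intervalSplits n) := by
  refine ⟨fun S hS => ?_, fun x hx => ?_⟩
  · obtain ⟨i, j, hi, hij, hj, rfl⟩ := mem_intervalSplits.mp hS
    exact isSplit_intervalSplit hi hij hj
  rw [mem_Icc] at hx
  rw [mem_intervalSplits]
  by_cases hxn : x ≤ n - 1
  · exact ⟨x, x, hx.1, le_rfl, hxn, by rw [intervalSplit, Icc_self]⟩
  · refine ⟨1, n - 1, le_rfl, by omega, le_rfl, ?_⟩
    have hlast : Icc 1 n \ Icc 1 (n - 1) = {x} := by
      ext w; simp only [mem_sdiff, mem_Icc, mem_singleton]; omega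
    have hinit : Icc 1 n \ {x} = Icc 1 (n - 1) := by
      ext w; simp only [mem_sdiff, mem_Icc, mem_singleton]; omega
    rw [intervalSplit, hlast, hinit, pair_comm]

theorem intervalSplits_isInjective (n : ℕ) : IsInjective (Icc 1 n) (intervalSplits n) := by
  intro Y Y' hY hY' hc hc' hne
  by_contra! hsep
  have hsame : ∀ i j, 1 ≤ i → i ≤ j → j ≤ n - 1 →
      (2 ≤ (Y ∩ Icc i j).card ↔ 2 ≤ (Y' ∩ Icc i j).card) := by
    intro i j hi hij hj
    have hmem := mem_intervalSplits.mpr ⟨i, j, hi, hij, hj, rfl⟩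
    have hcover : Icc 1 n ⊆ Icc i j ∪ (Icc 1 n \ Icc i j) := by
      rw [union_sdiff_self_eq_union]; exact subset_union_right
    constructor
    · intro h
      by_contra h'
      exact hsep _ hmem <| phiNe_pair_of_card_inter (Icc_ne_sdiff_Icc hij)
        (hY'.trans hcover) hc' h (by omega)
    · intro h
      by_contra h'
      exact hsep _ hmem <| phiNe_symm <| phiNe_pair_of_card_inter (Icc_ne_sdiff_Icc hij)
        (hY.trans hcover) hc h (by omega)
  obtain ⟨a, b, c, hab, hbc, rfl⟩ := exists_lt_lt_of_card_eq_three hc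
  obtain ⟨a', b', c', hab', hbc', rfl⟩ := exists_lt_lt_of_card_eq_three hc'
  simp only [two_le_card_inter_Icc_iff hab hbc, two_le_card_inter_Icc_iff hab' hbc'] at hsame
  have hYbd := fun x (hx : x ∈ ({a, b, c} : Finset ℕ)) => mem_Icc.mp (hY hx)
  have hY'bd := fun x (hx : x ∈ ({a', b', c'} : Finset ℕ)) => mem_Icc.mp (hY' hx)
  obtain ⟨rfl, rfl, rfl⟩ := eq_of_forall_Icc_iff (hYbd a (by simp)).1 hab hbc (hYbd c (by simp)).2
    (hY'bd a' (by simp)).1 hab' hbc' (hY'bd c' (by simp)).2 hsame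
  exact hne rfl

theorem ends_of_incompatible_intervalSplit {n i j k l : ℕ}
    (h : Incompatible (intervalSplit n i j) (intervalSplit n k l)) : i ≠ k ∧ j ≠ l ∧ i ≤ l := by
  have hint := fun A hA B hB => nonempty_iff_ne_empty.mpr (h.2 A hA B hB)
  obtain ⟨x, hx⟩ := hint (Icc i j) (by simp [intervalSplit]) (Icc k l) (by simp [intervalSplit])
  obtain ⟨y, hy⟩ := hint (Icc i j) (by simp [intervalSplit]) (Icc 1 n \ Icc k l)
    (by simp [intervalSplit])
  obtain ⟨z, hz⟩ := hint (Icc 1 n \ Icc i j) (by simp [intervalSplit]) (Icc k l)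
    (by simp [intervalSplit])
  simp only [mem_inter, mem_sdiff, mem_Icc] at hx hy hz
  omega

theorem dimSS_intervalSplits_le (n : ℕ) : dimSS (intervalSplits n) ≤ n / 2 := by
  refine dimSS_le fun 𝒯 hsub hpair => ?_
  have hsurj : Set.SurjOn (fun p : ℕ × ℕ => intervalSplit n p.1 p.2)
      {p | 1 ≤ p.1 ∧ p.1 ≤ p.2 ∧ p.2 ≤ n - 1} 𝒯 := fun S hS => by
    obtain ⟨i, j, hi, hij, hj, hS⟩ := mem_intervalSplits.mp (hsub hS)
    exact ⟨(i, j), ⟨hi, hij, hj⟩, hS⟩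
  obtain ⟨u, hu, hinj, rfl⟩ := exists_subset_injOn_image_eq_of_surjOn _ 𝒯 hsurj
  have hends : ∀ p ∈ u, ∀ q ∈ u, p ≠ q → p.1 ≠ q.1 ∧ p.2 ≠ q.2 ∧ p.1 ≤ q.2 :=
    fun p hp q hq hpq => ends_of_incompatible_intervalSplit <|
      hpair _ (mem_image_of_mem _ hp) _ (mem_image_of_mem _ hq) (hinj.ne hp hq hpq)
  have := two_mul_card_le_of_fst_le_snd u (n - 1)
    (fun p hp => ⟨(hu hp).1, (hu hp).2.2⟩)
    (fun p hp q hq h => by_contra fun hpq => (hends p hp q hq hpq).1 h)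
    (fun p hp q hq h => by_contra fun hpq => (hends p hp q hq hpq).2.1 h)
    (fun p hp q hq => if hpq : p = q then hpq ▸ (hu hp).2.1 else (hends p hp q hq hpq).2.2)
  rw [card_image_of_injOn hinj]
  omega

/-- For all integers `n ≥ 4`, `ID(n) ≤ ⌊n/2⌋`. -/
theorem statement15 (n : ℕ) (hn : 4 ≤ n) : ID n ≤ n / 2 :=
  (ID_le_dimSS (intervalSplits_isSplitSystem (by omega)) (intervalSplits_isInjective n)).trans
    (dimSS_intervalSplits_le n)

end InjectiveSplitSystems
end

section
/- The injective dimension satisfies ID(3) = 1, ID(4) = ID(5) = 2, ID(6) = ID(7) = ID(8) = 3, and ID(n) ≥ 3 for all n ≥ 9. -/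
namespace InjectiveSplitSystems

open Finset

variable {α : Type*} [DecidableEq α]

/-
Upper bounds are witnessed by explicit split systems, checked by evaluation.

For the lower bounds, injectivity applied to the triples `{u, v, x}` and `{u, v, y}` gives a
split that separates `x` from `y` and `u` from `v`. Hence on any subset `Y` the restrictions of
the splits form a complement-closed family of bipartitions of `Y` separating every two disjoint
pairs, and crossing restrictions come from incompatible splits. On four points two different
quartets are realised, and they cross. On six points, suppose no three members pairwise cross.
Two 3|3 bipartitions other than `P | Y \ P` and its complement share two points `x, y`, and
cross each other and the member separating `x | y` and the two outside points. If there is no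
3|3 bipartition, the 2-sets of the family form a graph of maximum degree two in which some `x, y`
have two common non-neighbours `u, v`, so nothing separates `x | y` and `u | v`. If `P | Y \ P`
is the only one, the 2-sets meeting `P` once form a perfect matching and every point of `P` needs
a neighbour inside `P`, which produces a point of degree three.
-/

/-- `e | Y \ e` and `f | Y \ f` are incompatible bipartitions of `Y`. -/
def Crosses (Y e f : Finset α) : Prop :=
  (e ∩ f).Nonempty ∧ (e \ f).Nonempty ∧ (f \ e).Nonempty ∧ (Y \ (e ∪ f)).Nonempty

lemma Crosses.of_mem {Y e f : Finset α} {a b c d : α} (hae : a ∈ e) (haf : a ∈ f)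
    (hbe : b ∈ e) (hbf : b ∉ f) (hce : c ∉ e) (hcf : c ∈ f) (hd : d ∈ Y) (hde : d ∉ e)
    (hdf : d ∉ f) : Crosses Y e f :=
  ⟨⟨a, mem_inter.2 ⟨hae, haf⟩⟩, ⟨b, mem_sdiff.2 ⟨hbe, hbf⟩⟩, ⟨c, mem_sdiff.2 ⟨hcf, hce⟩⟩,
    ⟨d, by simp [hd, hde, hdf]⟩⟩

lemma crosses_pair_pair {Y : Finset α} (hY : 4 ≤ Y.card) {x a b : α}
    (hxa : x ≠ a) (hxb : x ≠ b) (hab : a ≠ b) : Crosses Y {x, a} {x, b} := by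
  obtain ⟨d, hd, hdY⟩ := exists_mem_notMem_of_card_lt_card
    ((card_le_three (a := x) (b := a) (c := b)).trans_lt (by omega : 3 < Y.card))
  simp only [mem_insert, mem_singleton, not_or] at hdY
  exact .of_mem (a := x) (b := a) (c := b) (by simp) (by simp) (by simp) (by simp [hab, hxa.symm])
    (by simp [hab.symm, hxb.symm]) (by simp) hd (by simp [hdY.1, hdY.2.1])
    (by simp [hdY.1, hdY.2.2])

lemma crosses_pair_triple {Y P : Finset α} (hY : Y.card = 6) (hP3 : P.card = 3)
    {a b : α} (ha : a ∈ P) (hbP : b ∉ P) : Crosses Y {a, b} P := by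
  obtain ⟨c, hcP, hca⟩ : ∃ c ∈ P, c ≠ a := exists_mem_ne (by omega) a
  obtain ⟨d, hd, hdY⟩ := exists_mem_notMem_of_card_lt_card
    ((card_insert_le b P).trans_lt (by omega : P.card + 1 < Y.card))
  rw [mem_insert, not_or] at hdY
  have hcb : c ≠ b := fun h => hbP (h ▸ hcP)
  have hda : d ≠ a := fun h => hdY.2 (h ▸ ha)
  exact .of_mem (a := a) (b := b) (c := c) (by simp) ha (by simp) hbP (by simp [hca, hcb]) hcP hd
    (by simp [hdY.1, hda]) hdY.2

lemma crosses_triple_triple {Y P R : Finset α} (hY : Y.card = 6) (hP : P ⊆ Y) (hR : R ⊆ Y)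
    (hP3 : P.card = 3) (hR3 : R.card = 3) (hPR : (P ∩ R).card = 2) : Crosses Y P R := by
  have hu : (P ∪ R).card = 4 := by have := card_union_add_card_inter P R; omega
  refine ⟨card_pos.1 (by omega), card_pos.1 ?_, card_pos.1 ?_, card_pos.1 ?_⟩
  · have := card_sdiff_add_card_inter P R; omega
  · have := card_sdiff_add_card_inter R P; rw [inter_comm] at this; omega
  · rw [card_sdiff_of_subset (union_subset hP hR)]; omega

lemma pair_mem_of_card_eq_two {s : Finset α} {T : Finset (Finset α)} (hs : s ∈ T)
    (hs2 : s.card = 2) {x a : α} (hx : x ∈ s) (ha : a ∈ s) (hxa : x ≠ a) : {x, a} ∈ T := by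
  rwa [eq_of_subset_of_card_le (insert_subset hx (singleton_subset_iff.2 ha))
    (by rw [hs2, card_pair hxa])]

lemma one_lt_card_filter_pair_not_mem {s : Finset α} {T : Finset (Finset α)} {x y : α}
    (h : (s.filter fun z => {x, z} ∈ T).card + (s.filter fun z => {y, z} ∈ T).card + 1 < s.card) :
    1 < (s.filter fun z => {x, z} ∉ T ∧ {y, z} ∉ T).card := by
  have h' := card_filter_add_card_filter_not (s := s) fun z => {x, z} ∈ T ∨ {y, z} ∈ T
  rw [filter_or] at h'
  have := card_union_le (s.filter fun z => {x, z} ∈ T) (s.filter fun z => {y, z} ∈ T)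
  simp only [not_or] at h'
  omega

/-- A member `e` of `T` stands for the bipartition `e | Y \ e` of `Y`. -/
structure SeparatesPairs (Y : Finset α) (T : Finset (Finset α)) : Prop where
  subset : ∀ e ∈ T, e ⊆ Y
  sdiff_mem : ∀ e ∈ T, Y \ e ∈ T
  separates : ∀ ⦃x y u v⦄, x ∈ Y → y ∈ Y → u ∈ Y → v ∈ Y →
    x ≠ y → x ≠ u → x ≠ v → y ≠ u → y ≠ v → u ≠ v → ∃ e ∈ T, x ∈ e ∧ y ∉ e ∧ (u ∈ e ↔ v ∉ e)

def HasCrossingTriple (Y : Finset α) (T : Finset (Finset α)) : Prop :=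
  ∃ e ∈ T, ∃ f ∈ T, ∃ g ∈ T, Crosses Y e f ∧ Crosses Y e g ∧ Crosses Y f g

section CrossingTriple

variable {Y P : Finset α} {T : Finset (Finset α)}

lemma hasCrossingTriple_of_star (hY : 4 ≤ Y.card) {x a b c : α} (hxa : x ≠ a) (hxb : x ≠ b)
    (hxc : x ≠ c) (hab : a ≠ b) (hac : a ≠ c) (hbc : b ≠ c) (ha : {x, a} ∈ T) (hb : {x, b} ∈ T)
    (hc : {x, c} ∈ T) : HasCrossingTriple Y T :=
  ⟨_, ha, _, hb, _, hc, crosses_pair_pair hY hxa hxb hab, crosses_pair_pair hY hxa hxc hac,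
    crosses_pair_pair hY hxb hxc hbc⟩

lemma eq_of_pair_mem_of_pair_mem (hno : ¬HasCrossingTriple Y T) (hY : Y.card = 6) (hP : P ∈ T)
    (hP3 : P.card = 3) {p z₁ z₂ : α} (hp : p ∈ P) (hz₁ : z₁ ∉ P) (hz₂ : z₂ ∉ P)
    (h₁ : {p, z₁} ∈ T) (h₂ : {p, z₂} ∈ T) : z₁ = z₂ := by
  by_contra h
  exact hno ⟨_, h₁, _, h₂, _, hP,
    crosses_pair_pair (by omega) (ne_of_mem_of_not_mem hp hz₁) (ne_of_mem_of_not_mem hp hz₂) h,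
    crosses_pair_triple hY hP3 hp hz₁, crosses_pair_triple hY hP3 hp hz₂⟩

lemma eq_of_pair_mem_of_pair_mem' (hno : ¬HasCrossingTriple Y T) (hY : Y.card = 6) (hP : P ∈ T)
    (hP3 : P.card = 3) {p₁ p₂ z : α} (hp₁ : p₁ ∈ P) (hp₂ : p₂ ∈ P) (hz : z ∉ P)
    (h₁ : {p₁, z} ∈ T) (h₂ : {p₂, z} ∈ T) : p₁ = p₂ := by
  by_contra h
  rw [pair_comm] at h₁ h₂
  exact hno ⟨_, h₁, _, h₂, _, hP,
    crosses_pair_pair (by omega) (ne_of_mem_of_not_mem hp₁ hz).symm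
      (ne_of_mem_of_not_mem hp₂ hz).symm h,
    pair_comm p₁ z ▸ crosses_pair_triple hY hP3 hp₁ hz,
    pair_comm p₂ z ▸ crosses_pair_triple hY hP3 hp₂ hz⟩

end CrossingTriple

namespace SeparatesPairs

variable {Y P : Finset α} {T : Finset (Finset α)}

lemma exists_crosses (hT : SeparatesPairs Y T) (hY : 3 < Y.card) :
    ∃ e ∈ T, ∃ f ∈ T, Crosses Y e f := by
  obtain ⟨x, hx, y, hy, u, hu, v, hv, hxy, hxu, hxv, hyu, hyv, huv⟩ := three_lt_card.1 hY
  obtain ⟨e, he, hxe, hye, huve⟩ := hT.separates hx hy hu hv hxy hxu hxv hyu hyv huv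
  by_cases hue : u ∈ e
  · have hve := huve.1 hue
    obtain ⟨f, hf, hxf, huf, hyvf⟩ := hT.separates hx hu hy hv hxu hxy hxv hyu.symm huv hyv
    by_cases hyf : y ∈ f
    · exact ⟨e, he, f, hf, .of_mem hxe hxf hue huf hye hyf hv hve (hyvf.1 hyf)⟩
    · exact ⟨e, he, f, hf, .of_mem hxe hxf hue huf hve (not_not.1 (hyvf.not.1 hyf)) hy hye hyf⟩
  · have hve : v ∈ e := not_not.1 (huve.not.1 hue)
    obtain ⟨f, hf, hxf, hvf, hyuf⟩ := hT.separates hx hv hy hu hxv hxy hxu hyv.symm huv.symm hyu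
    by_cases hyf : y ∈ f
    · exact ⟨e, he, f, hf, .of_mem hxe hxf hve hvf hye hyf hu hue (hyuf.1 hyf)⟩
    · exact ⟨e, he, f, hf, .of_mem hxe hxf hve hvf hue (not_not.1 (hyuf.not.1 hyf)) hy hye hyf⟩

lemma exists_triple_or_pair_mem_of_mem (hT : SeparatesPairs Y T) (hY : Y.card = 6) {e : Finset α}
    (he : e ∈ T) {x y a b : α} (hxe : x ∈ e) (hae : a ∈ e) (hye : y ∉ e) (hbe : b ∉ e)
    (hy : y ∈ Y) (hb : b ∈ Y) (hxa : x ≠ a) (hyb : y ≠ b) :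
    (∃ P ∈ T, P.card = 3 ∧ x ∈ P ∧ y ∉ P) ∨ {x, a} ∈ T ∨ {y, b} ∈ T := by
  have hlo : 2 ≤ e.card :=
    card_pair hxa ▸ card_le_card (insert_subset hxe (singleton_subset_iff.2 hae))
  have hyb' : {y, b} ⊆ Y \ e := insert_subset (mem_sdiff.2 ⟨hy, hye⟩)
    (singleton_subset_iff.2 (mem_sdiff.2 ⟨hb, hbe⟩))
  have hhi : 2 ≤ (Y \ e).card := card_pair hyb ▸ card_le_card hyb'
  rw [card_sdiff_of_subset (hT.subset e he), hY] at hhi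
  rcases (by omega : e.card = 2 ∨ e.card = 3 ∨ e.card = 4) with h | h | h
  · exact .inr (.inl (pair_mem_of_card_eq_two he h hxe hae hxa))
  · exact .inl ⟨e, he, h, hxe, hye⟩
  · refine .inr (.inr (pair_mem_of_card_eq_two (hT.sdiff_mem e he) ?_ (hyb' (by simp))
      (hyb' (by simp)) hyb))
    rw [card_sdiff_of_subset (hT.subset e he), hY, h]

lemma exists_triple_or_pair_mem (hT : SeparatesPairs Y T) (hY : Y.card = 6) {x y u v : α}
    (hx : x ∈ Y) (hy : y ∈ Y) (hu : u ∈ Y) (hv : v ∈ Y) (hxy : x ≠ y) (hxu : x ≠ u) (hxv : x ≠ v)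
    (hyu : y ≠ u) (hyv : y ≠ v) (huv : u ≠ v) :
    (∃ P ∈ T, P.card = 3 ∧ x ∈ P ∧ y ∉ P) ∨
      {x, u} ∈ T ∨ {x, v} ∈ T ∨ {y, u} ∈ T ∨ {y, v} ∈ T := by
  obtain ⟨e, he, hxe, hye, huve⟩ := hT.separates hx hy hu hv hxy hxu hxv hyu hyv huv
  by_cases hue : u ∈ e
  · rcases hT.exists_triple_or_pair_mem_of_mem hY he hxe hue hye (huve.1 hue) hy hv hxu hyv
      with h | h | h
    exacts [.inl h, .inr (.inl h), .inr (.inr (.inr (.inr h)))]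
  · have hve : v ∈ e := not_not.1 (huve.not.1 hue)
    rcases hT.exists_triple_or_pair_mem_of_mem hY he hxe hve hye hue hy hu hxv hyu with h | h | h
    exacts [.inl h, .inr (.inr (.inl h)), .inr (.inr (.inr (.inl h)))]

lemma false_of_forall_card_ne_three (hT : SeparatesPairs Y T) (hY : Y.card = 6)
    (hno : ¬HasCrossingTriple Y T) (h3 : ∀ P ∈ T, P.card ≠ 3) : False := by
  obtain ⟨x, hx, y, hy, hxy, hfew⟩ : ∃ x ∈ Y, ∃ y ∈ Y, x ≠ y ∧ ∀ w ∈ ({x, y} : Finset α),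
      ((Y \ {x, y}).filter fun z => {w, z} ∈ T).card ≤ 1 := by
    by_cases hE : ∃ x ∈ Y, ∃ y ∈ Y, x ≠ y ∧ {x, y} ∈ T
    · -- an edge `{x, y}` leaves room for at most one further edge at `x` and at `y`
      obtain ⟨x, hx, y, hy, hxy, hxyT⟩ := hE
      refine ⟨x, hx, y, hy, hxy, fun w hw => card_le_one.2 fun z₁ h₁ z₂ h₂ => ?_⟩
      by_contra h₁₂
      simp only [mem_filter, mem_sdiff, mem_insert, mem_singleton, not_or] at h₁ h₂ hw
      rcases hw with rfl | rfl
      · exact hno <| hasCrossingTriple_of_star (by omega) hxy (Ne.symm h₁.1.2.1)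
          (Ne.symm h₂.1.2.1) (Ne.symm h₁.1.2.2) (Ne.symm h₂.1.2.2) h₁₂ hxyT h₁.2 h₂.2
      · exact hno <| hasCrossingTriple_of_star (by omega) hxy.symm (Ne.symm h₁.1.2.2)
          (Ne.symm h₂.1.2.2) (Ne.symm h₁.1.2.1) (Ne.symm h₂.1.2.1) h₁₂ (pair_comm x w ▸ hxyT)
          h₁.2 h₂.2
    · push Not at hE
      obtain ⟨x, hx⟩ := card_pos.1 (by omega : 0 < Y.card)
      obtain ⟨y, hy, hyx⟩ := exists_mem_ne (by omega : 1 < Y.card) x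
      refine ⟨x, hx, y, hy, hyx.symm, fun w hw => (card_eq_zero.2 ?_).trans_le zero_le_one⟩
      refine filter_eq_empty_iff.2 fun z hz hwz => ?_
      simp only [mem_sdiff, mem_insert, mem_singleton, not_or] at hz hw
      rcases hw with rfl | rfl
      exacts [hE w hx z hz.1 (Ne.symm hz.2.1) hwz, hE w hy z hz.1 (Ne.symm hz.2.2) hwz]
  have h4 : (Y \ {x, y}).card = 4 := by
    rw [card_sdiff_of_subset (insert_subset hx (singleton_subset_iff.2 hy)), hY, card_pair hxy]
  have hx' := hfew x (by simp)
  have hy' := hfew y (by simp)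
  obtain ⟨u, hu, v, hv, huv⟩ := one_lt_card.1 (one_lt_card_filter_pair_not_mem (s := Y \ {x, y})
    (x := x) (y := y) (T := T) (by omega))
  simp only [mem_filter, mem_sdiff, mem_insert, mem_singleton, not_or] at hu hv
  rcases hT.exists_triple_or_pair_mem hY hx hy hu.1.1 hv.1.1 hxy (Ne.symm hu.1.2.1)
    (Ne.symm hv.1.2.1) (Ne.symm hu.1.2.2) (Ne.symm hv.1.2.2) huv
    with ⟨P, hP, hP3, -⟩ | h | h | h | h
  exacts [h3 P hP hP3, hu.2.1 h, hv.2.1 h, hu.2.2 h, hv.2.2 h]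

lemma pair_mem_of_mem_triple (hT : SeparatesPairs Y T) (hY : Y.card = 6) (hP : P ∈ T)
    (huniq : ∀ R ∈ T, R.card = 3 → R = P ∨ R = Y \ P) {x y u v : α} (hx : x ∈ P) (hy : y ∈ P)
    (hu : u ∈ Y) (hv : v ∈ Y) (hxy : x ≠ y) (hxu : x ≠ u) (hxv : x ≠ v) (hyu : y ≠ u)
    (hyv : y ≠ v) (huv : u ≠ v) : {x, u} ∈ T ∨ {x, v} ∈ T ∨ {y, u} ∈ T ∨ {y, v} ∈ T := by
  refine (hT.exists_triple_or_pair_mem hY (hT.subset P hP hx) (hT.subset P hP hy) hu hv hxy hxu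
    hxv hyu hyv huv).resolve_left ?_
  rintro ⟨R, hR, hR3, hxR, hyR⟩
  rcases huniq R hR hR3 with rfl | rfl
  exacts [hyR hy, (mem_sdiff.1 hxR).2 hx]

lemma exists_pair_mem (hT : SeparatesPairs Y T) (hY : Y.card = 6) (hno : ¬HasCrossingTriple Y T)
    (hP : P ∈ T) (hP3 : P.card = 3) (huniq : ∀ R ∈ T, R.card = 3 → R = P ∨ R = Y \ P) {w : α}
    (hw : w ∈ P) : ∃ w' ∈ Y \ P, {w, w'} ∈ T := by
  by_contra! hw'
  obtain ⟨x, hx, hxw⟩ := exists_mem_ne (by omega : 1 < P.card) w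
  have hfew : ((Y \ P).filter fun z => {x, z} ∈ T).card ≤ 1 :=
    card_le_one.2 fun z₁ h₁ z₂ h₂ => by
      simp only [mem_filter, mem_sdiff] at h₁ h₂
      exact eq_of_pair_mem_of_pair_mem hno hY hP hP3 hx h₁.1.2 h₂.1.2 h₁.2 h₂.2
  have hnone : ((Y \ P).filter fun z => {w, z} ∈ T).card = 0 :=
    card_eq_zero.2 (filter_eq_empty_iff.2 hw')
  have h3 : (Y \ P).card = 3 := by
    rw [card_sdiff_of_subset (hT.subset P hP), hY, hP3]
  obtain ⟨u, hu, v, hv, huv⟩ := one_lt_card.1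
    (one_lt_card_filter_pair_not_mem (s := Y \ P) (x := x) (y := w) (T := T) (by omega))
  simp only [mem_filter, mem_sdiff] at hu hv
  rcases hT.pair_mem_of_mem_triple hY hP huniq hw hx hu.1.1 hv.1.1 hxw.symm
    (ne_of_mem_of_not_mem hw hu.1.2) (ne_of_mem_of_not_mem hw hv.1.2)
    (ne_of_mem_of_not_mem hx hu.1.2) (ne_of_mem_of_not_mem hx hv.1.2) huv with h | h | h | h
  exacts [hu.2.2 h, hv.2.2 h, hu.2.1 h, hv.2.1 h]

lemma pair_mem_or_pair_mem (hT : SeparatesPairs Y T) (hY : Y.card = 6)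
    (hno : ¬HasCrossingTriple Y T) (hP : P ∈ T) (hP3 : P.card = 3)
    (huniq : ∀ R ∈ T, R.card = 3 → R = P ∨ R = Y \ P) {p q r : α} (hp : p ∈ P) (hq : q ∈ P)
    (hr : r ∈ P) (hpq : p ≠ q) (hpr : p ≠ r) (hqr : q ≠ r) : {r, p} ∈ T ∨ {r, q} ∈ T := by
  obtain ⟨r', hr', hrr'⟩ := hT.exists_pair_mem hY hno hP hP3 huniq hr
  obtain ⟨hr'Y, hr'P⟩ := mem_sdiff.1 hr'
  rw [pair_comm r p, pair_comm r q]
  rcases hT.pair_mem_of_mem_triple hY hP huniq hp hq (hT.subset P hP hr) hr'Y hpq hpr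
    (ne_of_mem_of_not_mem hp hr'P) hqr (ne_of_mem_of_not_mem hq hr'P)
    (ne_of_mem_of_not_mem hr hr'P) with h | h | h | h
  · exact .inl h
  · exact absurd (eq_of_pair_mem_of_pair_mem' hno hY hP hP3 hp hr hr'P h hrr') hpr
  · exact .inr h
  · exact absurd (eq_of_pair_mem_of_pair_mem' hno hY hP hP3 hq hr hr'P h hrr') hqr

lemma false_of_unique_triple (hT : SeparatesPairs Y T) (hY : Y.card = 6)
    (hno : ¬HasCrossingTriple Y T) (hP : P ∈ T) (hP3 : P.card = 3)
    (huniq : ∀ R ∈ T, R.card = 3 → R = P ∨ R = Y \ P) : False := by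
  have hdeg : ∀ ⦃r p q⦄, r ∈ P → p ∈ P → q ∈ P → p ≠ q → r ≠ p → r ≠ q →
      {r, p} ∈ T → {r, q} ∉ T := fun r p q hr hp hq hpq hrp hrq hrpT hrqT => by
    obtain ⟨r', hr', hrr'⟩ := hT.exists_pair_mem hY hno hP hP3 huniq hr
    have hr'P := (mem_sdiff.1 hr').2
    exact hno <| hasCrossingTriple_of_star (by omega) hrp hrq (ne_of_mem_of_not_mem hr hr'P) hpq
      (ne_of_mem_of_not_mem hp hr'P) (ne_of_mem_of_not_mem hq hr'P) hrpT hrqT hrr'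
  obtain ⟨a, b, c, hab, hac, hbc, rfl⟩ := card_eq_three.1 hP3
  have ha : a ∈ ({a, b, c} : Finset α) := by simp
  have hb : b ∈ ({a, b, c} : Finset α) := by simp
  have hc : c ∈ ({a, b, c} : Finset α) := by simp
  have := hT.pair_mem_or_pair_mem hY hno hP hP3 huniq hb hc ha hbc hab.symm hac.symm
  have := hT.pair_mem_or_pair_mem hY hno hP hP3 huniq ha hc hb hac hab hbc.symm
  have := hT.pair_mem_or_pair_mem hY hno hP hP3 huniq ha hb hc hab hac hbc
  have := hdeg ha hb hc hbc hab hac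
  have := hdeg hb ha hc hac hab.symm hbc
  have := hdeg hc ha hb hab hac.symm hbc.symm
  rw [pair_comm b a, pair_comm c a, pair_comm c b] at *
  -- each point of `P` has a neighbour in `P`, but none has two
  tauto

lemma hasCrossingTriple_of_card_inter_eq_two (hT : SeparatesPairs Y T) (hY : Y.card = 6)
    {R : Finset α} (hP : P ∈ T) (hR : R ∈ T) (hP3 : P.card = 3) (hR3 : R.card = 3)
    (hPR : (P ∩ R).card = 2) : HasCrossingTriple Y T := by
  have hPY := hT.subset P hP
  have hRY := hT.subset R hR
  obtain ⟨x, y, hxy, hPRxy⟩ := card_eq_two.1 hPR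
  have hout : (Y \ (P ∪ R)).card = 2 := by
    have := card_union_add_card_inter P R
    rw [card_sdiff_of_subset (union_subset hPY hRY)]; omega
  obtain ⟨u, v, huv, huvY⟩ := card_eq_two.1 hout
  have hx : x ∈ P ∩ R := by simp [hPRxy]
  have hy : y ∈ P ∩ R := by simp [hPRxy]
  have hu : u ∈ Y \ (P ∪ R) := by simp [huvY]
  have hv : v ∈ Y \ (P ∪ R) := by simp [huvY]
  simp only [mem_inter, mem_sdiff, mem_union, not_or] at hx hy hu hv
  obtain ⟨e, he, hxe, hye, huve⟩ := hT.separates (hPY hx.1) (hPY hy.1) hu.1 hv.1 hxy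
    (ne_of_mem_of_not_mem hx.1 hu.2.1) (ne_of_mem_of_not_mem hx.1 hv.2.1)
    (ne_of_mem_of_not_mem hy.1 hu.2.1) (ne_of_mem_of_not_mem hy.1 hv.2.1) huv
  have hcross : ∀ S, x ∈ S → y ∈ S → u ∉ S → v ∉ S → Crosses Y e S := fun S hxS hyS huS hvS => by
    by_cases hue : u ∈ e
    · exact .of_mem hxe hxS hue huS hye hyS hv.1 (huve.1 hue) hvS
    · exact .of_mem hxe hxS (not_not.1 (huve.not.1 hue)) hvS hye hyS hu.1 hue huS
  exact ⟨e, he, P, hP, R, hR, hcross P hx.1 hy.1 hu.2.1 hv.2.1, hcross R hx.2 hy.2 hu.2.2 hv.2.2,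
    crosses_triple_triple hY hPY hRY hP3 hR3 hPR⟩

lemma hasCrossingTriple_of_ne (hT : SeparatesPairs Y T) (hY : Y.card = 6) {R : Finset α}
    (hP : P ∈ T) (hR : R ∈ T) (hP3 : P.card = 3) (hR3 : R.card = 3) (hRP : R ≠ P)
    (hRP' : R ≠ Y \ P) : HasCrossingTriple Y T := by
  have hPY := hT.subset P hP
  have hRY := hT.subset R hR
  have h0 : (P ∩ R).card ≠ 0 := fun h => hRP' <| eq_of_subset_of_card_le
    (fun z hz => mem_sdiff.2 ⟨hRY hz, fun hzP => by
      simpa [card_eq_zero.1 h] using mem_inter.2 ⟨hzP, hz⟩⟩)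
    (by rw [card_sdiff_of_subset hPY]; omega)
  have h3 : (P ∩ R).card ≠ 3 := fun h => hRP <| (eq_of_subset_of_card_le inter_subset_right
    (by omega)).symm.trans (eq_of_subset_of_card_le inter_subset_left (by omega))
  have hle : (P ∩ R).card ≤ 3 := hP3 ▸ card_le_card inter_subset_left
  rcases (by omega : (P ∩ R).card = 1 ∨ (P ∩ R).card = 2) with h | h
  · refine hT.hasCrossingTriple_of_card_inter_eq_two hY hP (hT.sdiff_mem R hR) hP3
      (by rw [card_sdiff_of_subset hRY]; omega) ?_
    have := card_sdiff_add_card_inter P R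
    rw [← inter_sdiff_assoc, inter_eq_left.2 hPY]; omega
  · exact hT.hasCrossingTriple_of_card_inter_eq_two hY hP hR hP3 hR3 h

theorem hasCrossingTriple (hT : SeparatesPairs Y T) (hY : Y.card = 6) :
    HasCrossingTriple Y T := by
  by_contra hno
  by_cases h3 : ∃ P ∈ T, P.card = 3
  · obtain ⟨P, hP, hP3⟩ := h3
    refine hT.false_of_unique_triple hY hno hP hP3 fun R hR hR3 => ?_
    by_contra! hne
    exact hno (hT.hasCrossingTriple_of_ne hY hP hR hP3 hR3 hne.1 hne.2)
  · push Not at h3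
    exact hT.false_of_forall_card_ne_three hY hno h3

end SeparatesPairs

lemma IsSplit.eq_pair_sdiff {X : Finset α} {S : Finset (Finset α)} (hS : IsSplit X S)
    {s : Finset α} (hs : s ∈ S) : S = {s, X \ s} := by
  obtain ⟨A, B, rfl, hAB, hAB', -, -⟩ := hS
  have hdisj := disjoint_iff_inter_eq_empty.2 hAB'
  have hB : B = X \ A := by rw [← hAB, union_sdiff_cancel_left hdisj]
  have hA : A = X \ B := by rw [← hAB, union_sdiff_cancel_right hdisj]
  rcases mem_insert.1 hs with rfl | hs
  · rw [← hB]
  · rw [mem_singleton.1 hs, ← hA, pair_comm]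

lemma two_mem_of_two_le_card_inter {a b c : α} {t : Finset α} (h : 2 ≤ ({a, b, c} ∩ t).card) :
    (a ∈ t ∧ b ∈ t) ∨ (a ∈ t ∧ c ∈ t) ∨ (b ∈ t ∧ c ∈ t) := by
  obtain ⟨p, hp, q, hq, hpq⟩ := one_lt_card.1 h
  simp only [mem_inter, mem_insert, mem_singleton] at hp hq
  grind

def traces (𝒮 : Finset (Finset (Finset α))) (Y : Finset α) : Finset (Finset α) :=
  𝒮.biUnion fun S => S.image (· ∩ Y)

lemma mem_traces {𝒮 : Finset (Finset (Finset α))} {Y e : Finset α} :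
    e ∈ traces 𝒮 Y ↔ ∃ S ∈ 𝒮, ∃ s ∈ S, s ∩ Y = e := by
  simp [traces]

lemma Crosses.incompatible {X Y s s' : Finset α} {S S' : Finset (Finset α)} (hS : IsSplit X S)
    (hS' : IsSplit X S') (hYX : Y ⊆ X) (hs : s ∈ S) (hs' : s' ∈ S')
    (h : Crosses Y (s ∩ Y) (s' ∩ Y)) : Incompatible S S' := by
  obtain ⟨h₁, h₂, h₃, h₄⟩ := h
  rw [hS.eq_pair_sdiff hs, hS'.eq_pair_sdiff hs']
  refine ⟨fun hSS' => ?_, ?_⟩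
  · have : s' ∈ ({s, X \ s} : Finset (Finset α)) := hSS' ▸ by simp
    rcases mem_insert.1 this with rfl | h
    · simp at h₂
    · obtain ⟨z, hz⟩ := h₁
      simp only [mem_singleton.1 h, mem_inter, mem_sdiff] at hz
      exact hz.2.1.2 hz.1.1
  · simp only [mem_insert, mem_singleton]
    rintro A (rfl | rfl) B (rfl | rfl) <;> refine Nonempty.ne_empty ?_
    · exact h₁.mono fun z => by simp +contextual
    · exact h₂.mono fun z => by simp +contextual [hYX _]
    · exact h₃.mono fun z => by simp +contextual [hYX _]
    · exact h₄.mono fun z => by simp +contextual [hYX _]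

lemma separatesPairs_traces {X Y : Finset α} {𝒮 : Finset (Finset (Finset α))}
    (hS : ∀ S ∈ 𝒮, IsSplit X S) (hInj : IsInjective X 𝒮) (hYX : Y ⊆ X) :
    SeparatesPairs Y (traces 𝒮 Y) where
  subset e he := by
    obtain ⟨S, -, s, -, rfl⟩ := mem_traces.1 he
    exact inter_subset_right
  sdiff_mem e he := by
    obtain ⟨S, hS𝒮, s, hs, rfl⟩ := mem_traces.1 he
    refine mem_traces.2 ⟨S, hS𝒮, X \ s, (hS S hS𝒮).eq_pair_sdiff hs ▸ by simp, ?_⟩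
    ext z
    simp only [mem_inter, mem_sdiff]
    exact ⟨fun h => ⟨h.2, fun h' => h.1.2 h'.1⟩, fun h => ⟨⟨hYX h.1, fun h' => h.2 ⟨h', h.1⟩⟩, h.1⟩⟩
  separates x y u v hx hy hu hv hxy hxu hxv hyu hyv huv := by
    have hsub : ∀ w ∈ Y, {u, v, w} ⊆ X := fun w hw => by
      simp [insert_subset_iff, hYX hu, hYX hv, hYX hw]
    obtain ⟨S, hS𝒮, t, ht, t', ht', htt', h₁, h₂⟩ := hInj {u, v, x} {u, v, y} (hsub x hx)
      (hsub y hy) (card_eq_three.2 ⟨u, v, x, huv, hxu.symm, hxv.symm, rfl⟩)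
      (card_eq_three.2 ⟨u, v, y, huv, hyu.symm, hyv.symm, rfl⟩)
      (fun h => by
        have : x ∈ ({u, v, y} : Finset α) := h ▸ by simp
        simp [hxu, hxv, hxy] at this)
    have hdisj : ∀ z ∈ t', z ∉ t := by
      have := (hS S hS𝒮).eq_pair_sdiff ht ▸ ht'
      simp only [mem_insert, mem_singleton, htt'.symm, false_or] at this
      simp [this]
    have := two_mem_of_two_le_card_inter h₁
    have := two_mem_of_two_le_card_inter h₂
    refine ⟨t ∩ Y, mem_traces.2 ⟨S, hS𝒮, t, ht, rfl⟩, ?_⟩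
    simp only [mem_inter, hx, hy, hu, hv, and_true]
    -- `t` holds two of `u, v, x` and the disjoint `t'` two of `u, v, y`
    grind

lemma Incompatible.symm {S T : Finset (Finset α)} (h : Incompatible S T) : Incompatible T S :=
  ⟨h.1.symm, fun A hA B hB => inter_comm A B ▸ h.2 B hB A hA⟩

lemma card_le_dimSS {𝒮 𝒯 : Finset (Finset (Finset α))} (h𝒯 : 𝒯 ⊆ 𝒮)
    (hpw : ∀ S ∈ 𝒯, ∀ T ∈ 𝒯, S ≠ T → Incompatible S T) : 𝒯.card ≤ dimSS 𝒮 :=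
  by classical exact le_sup (mem_filter.2 ⟨mem_powerset.2 h𝒯, hpw⟩)

lemma one_le_dimSS {X : Finset α} {𝒮 : Finset (Finset (Finset α))} (h𝒮 : IsSplitSystem X 𝒮)
    (hX : X.Nonempty) : 1 ≤ dimSS 𝒮 := by
  obtain ⟨x, hx⟩ := hX
  exact card_singleton _ ▸ card_le_dimSS (singleton_subset_iff.2 (h𝒮.2 x hx)) (by simp)

lemma two_le_dimSS {X : Finset α} {𝒮 : Finset (Finset (Finset α))} (hS : ∀ S ∈ 𝒮, IsSplit X S)
    (hInj : IsInjective X 𝒮) (hX : 3 < X.card) : 2 ≤ dimSS 𝒮 := by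
  obtain ⟨e, he, f, hf, hef⟩ := (separatesPairs_traces hS hInj subset_rfl).exists_crosses hX
  obtain ⟨S, hS𝒮, s, hs, rfl⟩ := mem_traces.1 he
  obtain ⟨S', hS'𝒮, s', hs', rfl⟩ := mem_traces.1 hf
  have h := hef.incompatible (hS S hS𝒮) (hS S' hS'𝒮) subset_rfl hs hs'
  refine card_pair h.1 ▸ card_le_dimSS (insert_subset hS𝒮 (singleton_subset_iff.2 hS'𝒮)) ?_
  simp only [mem_insert, mem_singleton]
  rintro _ (rfl | rfl) _ (rfl | rfl) hne
  exacts [absurd rfl hne, h, h.symm, absurd rfl hne]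

lemma three_le_dimSS {X : Finset α} {𝒮 : Finset (Finset (Finset α))}
    (hS : ∀ S ∈ 𝒮, IsSplit X S) (hInj : IsInjective X 𝒮) (hX : 6 ≤ X.card) : 3 ≤ dimSS 𝒮 := by
  obtain ⟨Y, hYX, hY⟩ := exists_subset_card_eq hX
  obtain ⟨e, he, f, hf, g, hg, hef, heg, hfg⟩ :=
    (separatesPairs_traces hS hInj hYX).hasCrossingTriple hY
  obtain ⟨S₁, hS₁, s₁, hs₁, rfl⟩ := mem_traces.1 he
  obtain ⟨S₂, hS₂, s₂, hs₂, rfl⟩ := mem_traces.1 hf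
  obtain ⟨S₃, hS₃, s₃, hs₃, rfl⟩ := mem_traces.1 hg
  have h₁₂ := hef.incompatible (hS S₁ hS₁) (hS S₂ hS₂) hYX hs₁ hs₂
  have h₁₃ := heg.incompatible (hS S₁ hS₁) (hS S₃ hS₃) hYX hs₁ hs₃
  have h₂₃ := hfg.incompatible (hS S₂ hS₂) (hS S₃ hS₃) hYX hs₂ hs₃
  refine (card_eq_three.2 ⟨S₁, S₂, S₃, h₁₂.1, h₁₃.1, h₂₃.1, rfl⟩).symm.le.trans
    (card_le_dimSS (by simp [insert_subset_iff, hS₁, hS₂, hS₃]) ?_)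
  simp only [mem_insert, mem_singleton]
  rintro _ (rfl | rfl | rfl) _ (rfl | rfl | rfl) hne
  exacts [absurd rfl hne, h₁₂, h₁₃, h₁₂.symm, absurd rfl hne, h₂₃, h₁₃.symm, h₂₃.symm,
    absurd rfl hne]

instance (Y Y' : Finset α) (S : Finset (Finset α)) : Decidable (phiNe Y Y' S) := by
  unfold phiNe; infer_instance

instance (S T : Finset (Finset α)) : Decidable (Incompatible S T) := by
  unfold Incompatible; infer_instance

/-- The recursion lets `decide` prune the search to families that are pairwise incompatible
so far. -/
def NoPairwiseIncompatible : ℕ → Finset (Finset (Finset α)) → Prop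
  | 0, _ => False
  | k + 1, 𝒩 => ∀ S ∈ 𝒩, NoPairwiseIncompatible k (𝒩.filter (Incompatible S))

instance decidableNoPairwiseIncompatible :
    ∀ (k : ℕ) (𝒩 : Finset (Finset (Finset α))), Decidable (NoPairwiseIncompatible k 𝒩)
  | 0, _ => isFalse id
  | k + 1, 𝒩 =>
    have := fun 𝒩' => decidableNoPairwiseIncompatible k 𝒩'
    inferInstanceAs (Decidable (∀ S ∈ 𝒩, NoPairwiseIncompatible k (𝒩.filter (Incompatible S))))

lemma NoPairwiseIncompatible.card_lt {k : ℕ} {𝒩 𝒯 : Finset (Finset (Finset α))}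
    (h : NoPairwiseIncompatible k 𝒩) (h𝒯 : 𝒯 ⊆ 𝒩)
    (hpw : ∀ S ∈ 𝒯, ∀ T ∈ 𝒯, S ≠ T → Incompatible S T) : 𝒯.card < k := by
  induction k generalizing 𝒩 𝒯 with
  | zero => exact h.elim
  | succ k ih =>
    obtain rfl | ⟨S, hS⟩ := 𝒯.eq_empty_or_nonempty
    · simp
    have hsub : 𝒯.erase S ⊆ 𝒩.filter (Incompatible S) := fun T hT => by
      obtain ⟨hTS, hT⟩ := mem_erase.1 hT
      exact mem_filter.2 ⟨h𝒯 hT, hpw S hS T hT hTS.symm⟩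
    have := ih (h S (h𝒯 hS)) hsub fun T hT U hU =>
      hpw T (mem_of_mem_erase hT) U (mem_of_mem_erase hU)
    rw [card_erase_of_mem hS] at this
    omega

lemma not_incompatible_of_singleton_mem {X : Finset α} {S T : Finset (Finset α)}
    (hS : IsSplit X S) {x : α} (hx : {x} ∈ T) : ¬Incompatible S T := by
  rintro ⟨-, h⟩
  obtain ⟨A, B, rfl, -, hAB, -, -⟩ := hS
  by_cases hxA : x ∈ A
  · have hxB : x ∉ B := fun hxB => by simpa [hAB] using mem_inter.2 ⟨hxA, hxB⟩
    exact h B (by simp) {x} hx (inter_singleton_of_notMem hxB)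
  · exact h A (by simp) {x} hx (inter_singleton_of_notMem hxA)

lemma dimSS_le_of_noPairwiseIncompatible {X : Finset α} {𝒮 : Finset (Finset (Finset α))} {k : ℕ}
    (hk : 1 ≤ k) (hS : ∀ S ∈ 𝒮, IsSplit X S)
    (h : NoPairwiseIncompatible (k + 1) (𝒮.filter fun S => ∀ A ∈ S, 2 ≤ A.card)) :
    dimSS 𝒮 ≤ k := by
  refine Finset.sup_le fun 𝒯 h𝒯 => ?_
  simp only [mem_filter, mem_powerset] at h𝒯
  obtain ⟨h𝒯𝒮, hpw⟩ := h𝒯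
  rcases le_or_gt 𝒯.card 1 with h𝒯 | h𝒯
  · omega
  -- a trivial split is compatible with every split, so it cannot lie in `𝒯`
  refine Nat.lt_succ_iff.1 (h.card_lt (fun S hS𝒯 => mem_filter.2 ⟨h𝒯𝒮 hS𝒯, fun A hA => ?_⟩) hpw)
  obtain ⟨T, hT𝒯, hTS⟩ := exists_mem_ne h𝒯 S
  have hA0 : A.Nonempty := by
    obtain ⟨B, C, rfl, -, -, hB, hC⟩ := hS S (h𝒯𝒮 hS𝒯)
    rcases mem_insert.1 hA with rfl | hA
    exacts [nonempty_iff_ne_empty.2 hB, mem_singleton.1 hA ▸ nonempty_iff_ne_empty.2 hC]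
  by_contra! hA1
  obtain ⟨x, rfl⟩ := card_eq_one.1 (by have := hA0.card_pos; omega : A.card = 1)
  exact not_incompatible_of_singleton_mem (hS T (h𝒯𝒮 hT𝒯)) hA (hpw T hT𝒯 S hS𝒯 hTS)

def splitsOf (X : Finset α) (F : Finset (Finset α)) : Finset (Finset (Finset α)) :=
  F.image fun A => {A, X \ A}

lemma isSplitSystem_splitsOf {X : Finset α} {F : Finset (Finset α)}
    (hF : ∀ A ∈ F, A ⊆ X ∧ A.Nonempty ∧ (X \ A).Nonempty) (hX : ∀ x ∈ X, {x} ∈ F) :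
    IsSplitSystem X (splitsOf X F) := by
  refine ⟨fun S hS => ?_, fun x hx => mem_image_of_mem _ (hX x hx)⟩
  obtain ⟨A, hA, rfl⟩ := mem_image.1 hS
  obtain ⟨hAX, hA, hXA⟩ := hF A hA
  exact ⟨A, X \ A, rfl, union_sdiff_of_subset hAX, inter_sdiff_self A X, hA.ne_empty,
    hXA.ne_empty⟩

lemma isInjective_splitsOf_powerset (X : Finset α) :
    IsInjective X (splitsOf X (X.powerset.filter fun A => A.Nonempty ∧ (X \ A).Nonempty)) := by
  intro Y Y' hY hY' hY3 hY'3 hne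
  obtain ⟨x, hxY, hxY'⟩ := not_subset.1 fun h => hne (eq_of_subset_of_card_le h (by omega))
  obtain ⟨y, hyY, hyx⟩ := exists_mem_ne (by omega : 1 < Y.card) x
  have hxy : {x, y} ⊆ Y := insert_subset hxY (singleton_subset_iff.2 hyY)
  have hY'xy : Y'.erase y ⊆ Y' ∩ (X \ {x, y}) := fun z hz => by
    obtain ⟨hzy, hz⟩ := mem_erase.1 hz
    simp [hz, hY' hz, hzy, ne_of_mem_of_not_mem hz hxY']
  have h2 : 2 ≤ (Y' ∩ (X \ {x, y})).card :=
    le_trans (by rw [card_erase_eq_ite]; split_ifs <;> omega) (card_le_card hY'xy)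
  have hXxy : (X \ {x, y}).Nonempty :=
    card_pos.1 (by have := card_le_card (inter_subset_right (s₁ := Y') (s₂ := X \ {x, y})); omega)
  refine ⟨{{x, y}, X \ {x, y}}, mem_image_of_mem _ (mem_filter.2 ⟨mem_powerset.2 (hxy.trans hY),
    insert_nonempty _ _, hXxy⟩), {x, y}, by simp, X \ {x, y}, by simp, fun h => ?_, ?_, h2⟩
  · have : x ∈ X \ {x, y} := h ▸ mem_insert_self x {y}
    simp at this
  · rw [inter_eq_right.2 hxy, card_pair hyx.symm]

lemma exists_injective_splitSystem {X : Finset α} (hX : 1 < X.card) :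
    ∃ 𝒮, IsSplitSystem X 𝒮 ∧ IsInjective X 𝒮 := by
  refine ⟨_, isSplitSystem_splitsOf (fun A hA => ?_) (fun x hx => ?_),
    isInjective_splitsOf_powerset X⟩
  · simp only [mem_filter, mem_powerset] at hA; exact hA
  · obtain ⟨y, hy, hyx⟩ := exists_mem_ne hX x
    simp only [mem_filter, mem_powerset, singleton_subset_iff]
    exact ⟨hx, singleton_nonempty x, y, by simp [hy, hyx]⟩

lemma isInjective_of_forall_powersetCard {X : Finset α} {𝒮 : Finset (Finset (Finset α))}
    (h : ∀ Y ∈ X.powersetCard 3, ∀ Y' ∈ X.powersetCard 3, Y ≠ Y' → ∃ S ∈ 𝒮, phiNe Y Y' S) :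
    IsInjective X 𝒮 := fun Y Y' hY hY' hY3 hY'3 =>
  h Y (mem_powersetCard.2 ⟨hY, hY3⟩) Y' (mem_powersetCard.2 ⟨hY', hY'3⟩)

lemma ID_le {n k : ℕ} {𝒮 : Finset (Finset (Finset ℕ))} (h𝒮 : IsSplitSystem (Icc 1 n) 𝒮)
    (hInj : IsInjective (Icc 1 n) 𝒮) (hdim : dimSS 𝒮 ≤ k) : ID n ≤ k :=
  (Nat.sInf_le (s := {d | ∃ 𝒮, IsSplitSystem (Icc 1 n) 𝒮 ∧ IsInjective (Icc 1 n) 𝒮 ∧ dimSS 𝒮 = d})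
    ⟨𝒮, h𝒮, hInj, rfl⟩).trans hdim

lemma le_ID {n k : ℕ} (hn : 2 ≤ n)
    (h : ∀ 𝒮, IsSplitSystem (Icc 1 n) 𝒮 → IsInjective (Icc 1 n) 𝒮 → k ≤ dimSS 𝒮) : k ≤ ID n := by
  obtain ⟨𝒮, h𝒮, hInj⟩ := exists_injective_splitSystem (X := Icc 1 n) (by simp; omega)
  refine le_csInf ⟨_, 𝒮, h𝒮, hInj, rfl⟩ ?_
  rintro d ⟨𝒮, h𝒮, hInj, rfl⟩
  exact h 𝒮 h𝒮 hInj

lemma ID_le_of_splitsOf {n k : ℕ} (F : Finset (Finset ℕ)) (hk : 1 ≤ k)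
    (hF : ∀ A ∈ F, A ⊆ Icc 1 n ∧ A.Nonempty ∧ (Icc 1 n \ A).Nonempty)
    (hX : ∀ x ∈ Icc 1 n, {x} ∈ F)
    (hInj : ∀ Y ∈ (Icc 1 n).powersetCard 3, ∀ Y' ∈ (Icc 1 n).powersetCard 3, Y ≠ Y' →
      ∃ S ∈ splitsOf (Icc 1 n) F, phiNe Y Y' S)
    (hdim : NoPairwiseIncompatible (k + 1)
      ((splitsOf (Icc 1 n) F).filter fun S => ∀ A ∈ S, 2 ≤ A.card)) :
    ID n ≤ k :=
  have h𝒮 := isSplitSystem_splitsOf hF hX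
  ID_le h𝒮 (isInjective_of_forall_powersetCard hInj)
    (dimSS_le_of_noPairwiseIncompatible hk h𝒮.1 hdim)

lemma one_le_ID {n : ℕ} (hn : 2 ≤ n) : 1 ≤ ID n :=
  le_ID hn fun _ h𝒮 _ => one_le_dimSS h𝒮 (nonempty_Icc.2 (by omega))

lemma two_le_ID {n : ℕ} (hn : 4 ≤ n) : 2 ≤ ID n :=
  le_ID (by omega) fun _ h𝒮 hInj => two_le_dimSS h𝒮.1 hInj (by simp; omega)

lemma three_le_ID {n : ℕ} (hn : 6 ≤ n) : 3 ≤ ID n :=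
  le_ID (by omega) fun _ h𝒮 hInj => three_le_dimSS h𝒮.1 hInj (by simp; omega)

lemma ID_three_le : ID 3 ≤ 1 :=
  ID_le_of_splitsOf {{1}, {2}, {3}} le_rfl (by decide) (by decide) (by decide +kernel)
    (by decide)

lemma ID_four_le : ID 4 ≤ 2 :=
  ID_le_of_splitsOf {{1, 2}, {1, 3}, {1}, {2}, {3}, {4}} (by omega) (by decide) (by decide)
    (by decide +kernel) (by decide)

lemma ID_five_le : ID 5 ≤ 2 :=
  ID_le_of_splitsOf {{1, 2}, {2, 3}, {3, 4}, {4, 5}, {1, 5}, {1}, {2}, {3}, {4}, {5}} (by omega)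
    (by decide) (by decide) (by decide +kernel) (by decide)

lemma ID_six_le : ID 6 ≤ 3 :=
  ID_le_of_splitsOf {{1, 4, 6}, {1, 2, 6}, {1, 4, 5}, {1, 2}, {3, 4}, {2, 5}, {4, 6},
    {1}, {2}, {3}, {4}, {5}, {6}} (by omega) (by decide) (by decide) (by decide +kernel) (by decide)

lemma ID_seven_le : ID 7 ≤ 3 :=
  ID_le_of_splitsOf {{4, 5, 7}, {2, 6, 7}, {1, 2, 5}, {3, 6, 7}, {2, 3, 6}, {1, 3, 4}, {6, 7},
    {1, 3}, {4, 7}, {2, 5}, {3, 7}, {1}, {2}, {3}, {4}, {5}, {6}, {7}} (by omega) (by decide)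
    (by decide) (by decide +kernel) (by decide)

lemma ID_eight_le : ID 8 ≤ 3 :=
  ID_le_of_splitsOf {{1, 6, 7, 8}, {1, 2, 4, 6}, {1, 2, 5, 8}, {3, 6, 7}, {1, 2, 8}, {5, 7, 8},
    {1, 4, 6}, {1, 6, 8}, {2, 3, 5}, {1, 4}, {2, 5}, {6, 7}, {5, 8}, {1, 8}, {2, 4}, {3, 5},
    {1}, {2}, {3}, {4}, {5}, {6}, {7}, {8}} (by omega) (by decide) (by decide)
    (by decide +kernel) (by decide)

/-- `ID(3) = 1`, `ID(4) = ID(5) = 2`, `ID(6) = ID(7) = ID(8) = 3`,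
and `ID(n) ≥ 3` for all `n ≥ 9`. -/
theorem statement16 :
    ID 3 = 1 ∧ ID 4 = 2 ∧ ID 5 = 2 ∧ ID 6 = 3 ∧ ID 7 = 3 ∧ ID 8 = 3 ∧
    ∀ n : ℕ, 9 ≤ n → 3 ≤ ID n :=
  ⟨ID_three_le.antisymm (one_le_ID (by norm_num)), ID_four_le.antisymm (two_le_ID le_rfl),
    ID_five_le.antisymm (two_le_ID (by norm_num)), ID_six_le.antisymm (three_le_ID le_rfl),
    ID_seven_le.antisymm (three_le_ID (by norm_num)),
    ID_eight_le.antisymm (three_le_ID (by norm_num)), fun _ hn => three_le_ID (by omega)⟩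

end InjectiveSplitSystems
end
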